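/- The antipode identity for exponential iterated integrals: for a bounded measurable h : [0,1] → ℂ define (Rh)(t) := −h(1−t) (the pullback along the reversed path λ^{-1} of a form pulling back to h along λ). Then for bounded measurable d_1, …, d_n, f_{12}, …, f_{(n−1)n} : [0,1] → ℂ, ∫ e^{R d_1} (R f_{12}) e^{R d_2} ⋯ (R f_{(n−1)n}) e^{R d_n} = ∫ e^{−d_n} (−f_{(n−1)n}) e^{−d_{n−1}} ⋯ (−f_{12}) e^{−d_1}, i.e. ∫_{λ^{-1}} e^{δ_1} ω_{12} ⋯ ω_{(n−1)n} e^{δ_n} = ∫_λ e^{−δ_n} (−ω_{(n−1)n}) ⋯ (−ω_{12}) e^{−δ_1}. -/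

import Mathlib

open MeasureTheory Set

/-- The simplex `{t | a ≤ t 0 ≤ t 1 ≤ ⋯ ≤ t (n-1) ≤ b}`. -/
def simplexSet (a b : ℝ) (n : ℕ) : Set (Fin n → ℝ) :=
  {t | (∀ i, a ≤ t i ∧ t i ≤ b) ∧ ∀ i j : Fin n, i ≤ j → t i ≤ t j}

/-- The iterated integral `∫_{a ≤ t_1 ≤ ⋯ ≤ t_n ≤ b} w_1(t_1) ⋯ w_n(t_n)` of a word
`w` of complex-valued functions; it equals `1` for the empty word. -/
noncomputable def itIntL (a b : ℝ) (w : List (ℝ → ℂ)) : ℂ :=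
  ∫ t in simplexSet a b w.length, ∏ i : Fin w.length, w.get i (t i)

/-- The word `d_0^{m_0} f_0 d_1^{m_1} f_1 ⋯ f_{n-1} d_n^{m_n}` (with `d_i` repeated `m_i`
times), one of the terms in the defining sum of an exponential iterated integral. -/
def expWord {n : ℕ} (d : Fin (n + 1) → ℝ → ℂ) (f : Fin n → ℝ → ℂ)
    (m : Fin (n + 1) → ℕ) : List (ℝ → ℂ) :=
  (List.ofFn fun i : Fin n =>
      List.replicate (m i.castSucc) (d i.castSucc) ++ [f i]).flatten
    ++ List.replicate (m (Fin.last n)) (d (Fin.last n))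

/-- The exponential iterated integral `∫ e^{d_0} f_0 e^{d_1} f_1 ⋯ f_{n-1} e^{d_n}`
over `[a,b]`: the sum over all `(m_0, …, m_n) ∈ ℕ^{n+1}` of the iterated integrals
of the words `d_0^{m_0} f_0 d_1^{m_1} ⋯ f_{n-1} d_n^{m_n}`. -/
noncomputable def expItInt (a b : ℝ) {n : ℕ} (d : Fin (n + 1) → ℝ → ℂ)
    (f : Fin n → ℝ → ℂ) : ℂ :=
  ∑' m : Fin (n + 1) → ℕ, itIntL a b (expWord d f m)

/-- The pullback along the reversed path `λ⁻¹` of a 1-form pulling back to `h`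
along `λ`. -/
def pathRev (h : ℝ → ℂ) : ℝ → ℂ := fun t => -h (1 - t)

/-!
Both sides are sums over exponent tuples `m`, and they agree term by term after reindexing
`m ↦ m ∘ rev`. The affine map `t ↦ (1 - t_n, …, 1 - t_1)` preserves Lebesgue measure and maps
the simplex onto itself, so the iterated integral of `w_1 ⋯ w_k` pulled back along `λ⁻¹` equals
that of `(-w_k) ⋯ (-w_1)` along `λ`; and reversing the word `d_1^{m_1} f_{12} ⋯ d_n^{m_n}` gives
the word of the reversed tuples `d ∘ rev`, `f ∘ rev` with exponents `m ∘ rev`.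
-/

def simplexReflect (a b : ℝ) {n : ℕ} (t : Fin n → ℝ) : Fin n → ℝ := fun i => a + b - t i.rev

lemma simplexReflect_simplexReflect (a b : ℝ) {n : ℕ} (t : Fin n → ℝ) :
    simplexReflect a b (simplexReflect a b t) = t := by
  funext i
  simp [simplexReflect]

lemma simplexReflect_mem_simplexSet {a b : ℝ} {n : ℕ} {t : Fin n → ℝ}
    (ht : t ∈ simplexSet a b n) : simplexReflect a b t ∈ simplexSet a b n := by
  obtain ⟨hbound, hmono⟩ := ht
  refine ⟨fun i => ?_, fun i j hij => ?_⟩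
  · have := hbound i.rev
    constructor <;> simp only [simplexReflect] <;> linarith
  · have := hmono _ _ (Fin.rev_le_rev.mpr hij)
    simp only [simplexReflect]
    linarith

lemma preimage_simplexReflect_simplexSet (a b : ℝ) (n : ℕ) :
    simplexReflect a b ⁻¹' simplexSet a b n = simplexSet a b n := by
  ext t
  refine ⟨fun h => ?_, simplexReflect_mem_simplexSet⟩
  simpa only [simplexReflect_simplexReflect] using simplexReflect_mem_simplexSet h

lemma setIntegral_simplexSet_comp_simplexReflect {E : Type*} [NormedAddCommGroup E]
    [NormedSpace ℝ E] (a b : ℝ) (n : ℕ) (F : (Fin n → ℝ) → E) :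
    ∫ t in simplexSet a b n, F (simplexReflect a b t) = ∫ t in simplexSet a b n, F t := by
  let T : (Fin n → ℝ) ≃ᵐ (Fin n → ℝ) :=
    MeasurableEquiv.arrowCongr' Fin.revPerm (MeasurableEquiv.subLeft (a + b))
  have hT : MeasurePreserving T volume volume :=
    volume_preserving_arrowCongr' _ _ (Measure.measurePreserving_sub_left volume _)
  have := hT.setIntegral_preimage_emb T.measurableEmbedding F (simplexSet a b n)
  rwa [show ⇑T = simplexReflect a b from rfl, preimage_simplexReflect_simplexSet] at this

lemma itIntL_eq_setIntegral_prod (a b : ℝ) (w : List (ℝ → ℂ)) {n : ℕ} (h : w.length = n) :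
    itIntL a b w = ∫ t in simplexSet a b n, ∏ i : Fin n, w[i.val] (t i) := by
  subst h
  rfl

lemma itIntL_map_reflect (a b : ℝ) (w : List (ℝ → ℂ)) :
    itIntL a b (w.map fun h t => h (a + b - t)) = itIntL a b w.reverse := by
  rw [itIntL_eq_setIntegral_prod a b _ (List.length_map _),
    itIntL_eq_setIntegral_prod a b _ (List.length_reverse),
    ← setIntegral_simplexSet_comp_simplexReflect]
  congr 1 with t
  refine Fintype.prod_equiv Fin.revPerm _ _ fun i => ?_
  have hidx : w.length - 1 - (Fin.revPerm i : ℕ) = i := by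
    rw [Fin.revPerm_apply, Fin.val_rev]; omega
  simp only [simplexReflect, List.getElem_map, List.getElem_reverse, sub_sub_cancel,
    Fin.revPerm_apply]
  rw [getElem_congr_idx hidx]

lemma itIntL_map_pathRev (w : List (ℝ → ℂ)) :
    itIntL 0 1 (w.map pathRev) = itIntL 0 1 (w.map fun h t => -h t).reverse := by
  rw [← itIntL_map_reflect, List.map_map]
  simp only [zero_add]
  rfl

lemma expWord_map {n : ℕ} (g : (ℝ → ℂ) → ℝ → ℂ) (d : Fin (n + 1) → ℝ → ℂ)
    (f : Fin n → ℝ → ℂ) (m : Fin (n + 1) → ℕ) :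
    expWord (g ∘ d) (g ∘ f) m = (expWord d f m).map g := by
  simp [expWord, List.map_flatten, List.map_ofFn, Function.comp_def]

lemma expWord_cons {n : ℕ} (d₀ f₀ : ℝ → ℂ) (m₀ : ℕ) (d : Fin (n + 1) → ℝ → ℂ)
    (f : Fin n → ℝ → ℂ) (m : Fin (n + 1) → ℕ) :
    expWord (Fin.cons d₀ d) (Fin.cons f₀ f) (Fin.cons m₀ m) =
      List.replicate m₀ d₀ ++ f₀ :: expWord d f m := by
  simp only [expWord, List.ofFn_succ, Fin.castSucc_zero, Fin.cons_zero, Fin.cons_succ,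
    ← Fin.succ_castSucc, ← Fin.succ_last, List.flatten_cons, List.append_assoc,
    List.cons_append, List.nil_append]

lemma expWord_snoc {n : ℕ} (d : Fin (n + 1) → ℝ → ℂ) (f : Fin n → ℝ → ℂ)
    (m : Fin (n + 1) → ℕ) (dₗ fₗ : ℝ → ℂ) (mₗ : ℕ) :
    expWord (Fin.snoc d dₗ) (Fin.snoc f fₗ) (Fin.snoc m mₗ) =
      expWord d f m ++ fₗ :: List.replicate mₗ dₗ := by
  simp only [expWord, List.ofFn_succ', List.concat_eq_append, Fin.snoc_castSucc,
    Fin.snoc_last, List.flatten_append, List.flatten_cons, List.flatten_nil, List.append_nil,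
    List.append_assoc, List.cons_append, List.nil_append]

lemma expWord_reverse {n : ℕ} (d : Fin (n + 1) → ℝ → ℂ) (f : Fin n → ℝ → ℂ)
    (m : Fin (n + 1) → ℕ) :
    (expWord d f m).reverse = expWord (d ∘ Fin.rev) (f ∘ Fin.rev) (m ∘ Fin.rev) := by
  induction n with
  | zero =>
    have hrev : (Fin.rev : Fin 1 → Fin 1) = id := funext fun _ => Subsingleton.elim _ _
    simp [expWord, hrev]
  | succ n ih =>
    rw [← Fin.snoc_init_self d, ← Fin.snoc_init_self f, ← Fin.snoc_init_self m,
      Fin.snoc_comp_rev, Fin.snoc_comp_rev, Fin.snoc_comp_rev, expWord_snoc, expWord_cons,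
      ← ih]
    simp

lemma itIntL_expWord_pathRev {n : ℕ} (d : Fin (n + 1) → ℝ → ℂ) (f : Fin n → ℝ → ℂ)
    (m : Fin (n + 1) → ℕ) :
    itIntL 0 1 (expWord (fun i => pathRev (d i)) (fun i => pathRev (f i)) m) =
      itIntL 0 1 (expWord (fun i t => -d i.rev t) (fun i t => -f i.rev t) (m ∘ Fin.rev)) := by
  have hneg : (fun i t => -d i.rev t) = (fun h t => -h t) ∘ d ∘ Fin.rev := rfl
  have hneg' : (fun i t => -f i.rev t) = (fun h t => -h t) ∘ f ∘ Fin.rev := rfl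
  rw [hneg, hneg', expWord_map, ← expWord_reverse, List.map_reverse, ← itIntL_map_pathRev,
    ← expWord_map]
  rfl

theorem stmt8_general {n : ℕ} (d : Fin (n + 1) → ℝ → ℂ) (f : Fin n → ℝ → ℂ) :
    expItInt 0 1 (fun i => pathRev (d i)) (fun i => pathRev (f i)) =
      expItInt 0 1 (fun i t => -d i.rev t) (fun i t => -f i.rev t) := by
  rw [expItInt, expItInt]
  conv_rhs => rw [← (Fin.revPerm.arrowCongr (Equiv.refl ℕ)).tsum_eq]
  exact tsum_congr fun m => itIntL_expWord_pathRev d f m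

/-- the antipode identity
`∫_{λ⁻¹} e^{δ_1} ω_{12} ⋯ ω_{(n-1)n} e^{δ_n}
  = ∫_λ e^{-δ_n} (-ω_{(n-1)n}) ⋯ (-ω_{12}) e^{-δ_1}` in pulled-back form. -/
theorem stmt8 {n : ℕ} (d : Fin (n + 1) → ℝ → ℂ) (f : Fin n → ℝ → ℂ)
    (hdm : ∀ i, Measurable (d i)) (hfm : ∀ i, Measurable (f i))
    (hdb : ∀ i, ∃ C, ∀ t ∈ Icc (0 : ℝ) 1, ‖d i t‖ ≤ C)
    (hfb : ∀ i, ∃ C, ∀ t ∈ Icc (0 : ℝ) 1, ‖f i t‖ ≤ C) :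
    expItInt 0 1 (fun i => pathRev (d i)) (fun i => pathRev (f i)) =
      expItInt 0 1 (fun i t => -d i.rev t) (fun i t => -f i.rev t) :=
  stmt8_general d f
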